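/- Let r be an odd integer with r ≥ 3 and n ≥ 2, and let W ⊆ 2^{[n]} be a weakly r-separated collection. For an integer i, let T^i := {A ⊆ [n−1] : |A| = i, A ∈ W, and A∪{n} ∈ W}. Then T^i is an (r−1)-separated collection; moreover, T^i is a weakly (r−2)-separated collection. -/

import Mathlib

/-!
Let `A`, `B ⊆ [n-1]` be twins of equal size. Weak `r`-separation of `A ∪ {n}` and `B` forces
`alt(A ∪ {n}, B) ≤ r + 1`: at `r + 2`, `A ∪ {n}` could surround `B` only if it were not larger,
and `B` cannot surround `A ∪ {n}` because `n` is the largest element of all.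
Since `n` exceeds everything in `A ∪ B`, it extends any alternating sequence of `A`, `B` of even
length by one more term. An alternating sequence of length `r + 1` thus yields one of length
`r + 2` for `A ∪ {n}`, `B` or for `B ∪ {n}`, `A`, so `alt(A, B) ≤ r`. If `alt(A, B) = r`, take
a sequence of odd length `r` that starts and ends in `A ∖ B`. Were `A` not to surround `B`, some
element of `B ∖ A` could be put in front of it or after it, giving an even length `r + 1`, and
then appending `n` gives the same contradiction.
-/

open Finset

/-- An alternating sequence for the pair of sets `A`, `B`: a strictly increasing
sequence whose odd-position elements lie in one of `A \ B`, `B \ A` and whose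
even-position elements lie in the other. -/
def IsAltSeq (A B : Finset ℕ) {m : ℕ} (f : Fin m → ℕ) : Prop :=
  StrictMono f ∧
    ((∀ j : Fin m, (j : ℕ) % 2 = 0 → f j ∈ A \ B) ∧
        (∀ j : Fin m, (j : ℕ) % 2 = 1 → f j ∈ B \ A) ∨
      (∀ j : Fin m, (j : ℕ) % 2 = 0 → f j ∈ B \ A) ∧
        (∀ j : Fin m, (j : ℕ) % 2 = 1 → f j ∈ A \ B))

/-- `altLen A B` is the maximum length of an alternating sequence for `A`, `B`. -/
noncomputable def altLen (A B : Finset ℕ) : ℕ :=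
  sSup {m : ℕ | ∃ f : Fin m → ℕ, IsAltSeq A B f}

/-- `A` surrounds `B`:  `min (A \ B) < min (B \ A)` and `max (B \ A) < max (A \ B)`. -/
def Surrounds (A B : Finset ℕ) : Prop :=
  (A \ B).min < (B \ A).min ∧ (B \ A).max < (A \ B).max

/-- Weak `r`-separation for an odd `r`. -/
def WeaklySep (r : ℕ) (A B : Finset ℕ) : Prop :=
  altLen A B ≤ r + 2 ∧
    (altLen A B = r + 2 →
      Surrounds A B ∧ A.card ≤ B.card ∨ Surrounds B A ∧ B.card ≤ A.card)

def IsAlt (X Y : Finset ℕ) {m : ℕ} (f : Fin m → ℕ) : Prop :=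
  StrictMono f ∧ ∀ j : Fin m, f j ∈ if Even (j : ℕ) then X else Y

lemma isAltSeq_iff {A B : Finset ℕ} {m : ℕ} {f : Fin m → ℕ} :
    IsAltSeq A B f ↔ IsAlt (A \ B) (B \ A) f ∨ IsAlt (B \ A) (A \ B) f := by
  have parity : ∀ X Y : Finset ℕ,
      ((∀ j : Fin m, (j : ℕ) % 2 = 0 → f j ∈ X) ∧ (∀ j : Fin m, (j : ℕ) % 2 = 1 → f j ∈ Y)) ↔
        ∀ j : Fin m, f j ∈ if Even (j : ℕ) then X else Y := by
    intro X Y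
    simp only [← Nat.even_iff, ← Nat.odd_iff, ← Nat.not_even_iff_odd]
    refine ⟨fun h j => ?_, fun h => ⟨fun j hj => ?_, fun j hj => ?_⟩⟩
    · split_ifs with hj
      exacts [h.1 j hj, h.2 j hj]
    · simpa [hj] using h j
    · simpa [hj] using h j
  simp only [IsAltSeq, IsAlt, parity, and_or_left]

namespace IsAlt

variable {X Y : Finset ℕ} {m : ℕ} {f : Fin m → ℕ}

lemma mono (hf : IsAlt X Y f) {X' Y' : Finset ℕ} (hX : X ⊆ X') (hY : Y ⊆ Y') :
    IsAlt X' Y' f :=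
  ⟨hf.1, fun j => by
    have := hf.2 j
    split_ifs at this ⊢
    exacts [hX this, hY this]⟩

lemma mem_union (hf : IsAlt X Y f) (j : Fin m) : f j ∈ X ∪ Y := by
  have := hf.2 j
  split_ifs at this
  exacts [mem_union_left _ this, mem_union_right _ this]

lemma cons (hf : IsAlt X Y f) {x : ℕ} (hx : x ∈ Y) (hlt : ∀ j, x < f j) :
    IsAlt Y X (Fin.cons (α := fun _ => ℕ) x f) :=
  ⟨Fin.strictMono_cons.2 ⟨hlt, hf.1⟩,
    Fin.cases (by simpa using hx) fun j => by
      simpa only [Fin.cons_succ, Fin.val_succ, Nat.even_add_one, ite_not] using hf.2 j⟩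

lemma snoc (hf : IsAlt X Y f) {x : ℕ} (hx : x ∈ if Even m then X else Y) (hlt : ∀ j, f j < x) :
    IsAlt X Y (Fin.snoc (α := fun _ => ℕ) f x) := by
  refine ⟨?_, Fin.lastCases (by simpa using hx) fun j => by simpa using hf.2 j⟩
  rw [← Fin.insertNth_last', Fin.strictMono_insertNth_iff]
  exact ⟨hf.1, fun j _ => hlt j, fun j hj => absurd hj (Fin.castSucc_lt_last j).not_ge⟩

end IsAlt

lemma bddAbove_setOf_isAltSeq (A B : Finset ℕ) :
    BddAbove {m : ℕ | ∃ f : Fin m → ℕ, IsAltSeq A B f} := by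
  refine ⟨(A ∪ B).card, ?_⟩
  rintro m ⟨f, hf⟩
  have hsub : A \ B ∪ B \ A ⊆ A ∪ B := union_subset_union sdiff_subset sdiff_subset
  have hmem : ∀ j, f j ∈ A ∪ B := fun j => by
    rcases isAltSeq_iff.1 hf with h | h
    · exact hsub (h.mem_union j)
    · exact hsub (union_comm (B \ A) _ ▸ h.mem_union j)
  simpa using card_le_card_of_injOn (s := univ) f (fun j _ => hmem j) hf.1.injective.injOn

lemma IsAlt.le_altLen {A B : Finset ℕ} {m : ℕ} {f : Fin m → ℕ}
    (hf : IsAlt (A \ B) (B \ A) f) : m ≤ altLen A B :=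
  le_csSup (bddAbove_setOf_isAltSeq A B) ⟨f, isAltSeq_iff.2 (Or.inl hf)⟩

lemma exists_isAlt_of_le_altLen {A B : Finset ℕ} {k : ℕ} (hk : k ≤ altLen A B) :
    ∃ f : Fin k → ℕ, IsAlt (A \ B) (B \ A) f ∨ IsAlt (B \ A) (A \ B) f := by
  have hempty : IsAltSeq A B (Fin.elim0 : Fin 0 → ℕ) :=
    isAltSeq_iff.2 (Or.inl ⟨fun a => a.elim0, fun j => j.elim0⟩)
  obtain ⟨f, hf⟩ : ∃ f : Fin (altLen A B) → ℕ, IsAltSeq A B f :=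
    Nat.sSup_mem (s := {m : ℕ | ∃ f : Fin m → ℕ, IsAltSeq A B f}) ⟨0, _, hempty⟩
      (bddAbove_setOf_isAltSeq A B)
  have restrict : ∀ {X Y : Finset ℕ}, IsAlt X Y f → IsAlt X Y (f ∘ Fin.castLE hk) :=
    fun h => ⟨h.1.comp (Fin.strictMono_castLE hk), fun j => h.2 _⟩
  exact ⟨_, (isAltSeq_iff.1 hf).imp restrict restrict⟩

namespace Finset

variable {α : Type*} [LinearOrder α] {X Y : Finset α} {x : α}

lemma exists_le_of_not_min_lt (hx : x ∈ X) (h : ¬ X.min < Y.min) : ∃ y ∈ Y, y ≤ x := by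
  by_contra! hY
  refine h ((min_le hx).trans_lt ?_)
  rw [min_eq_inf_withTop, Finset.lt_inf_iff (WithTop.coe_lt_top x)]
  exact fun y hy => WithTop.coe_lt_coe.2 (hY y hy)

lemma exists_le_of_not_max_lt (hx : x ∈ X) (h : ¬ Y.max < X.max) : ∃ y ∈ Y, x ≤ y := by
  by_contra! hY
  refine h (lt_of_lt_of_le ?_ (le_max hx))
  rw [max_eq_sup_withBot, Finset.sup_lt_iff (WithBot.bot_lt_coe x)]
  exact fun y hy => WithBot.coe_lt_coe.2 (hY y hy)

end Finset

section Twins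

variable {A B : Finset ℕ} {n r : ℕ}

lemma IsAlt.succ_le_altLen_insert {m : ℕ} {f : Fin m → ℕ} (hf : IsAlt (A \ B) (B \ A) f)
    (hA : A ⊆ range n) (hB : B ⊆ range n) (hm : Even m) : m + 1 ≤ altLen (insert n A) B := by
  have hnB : n ∉ B := fun h => notMem_range_self (hB h)
  have hlt : ∀ j, f j < n := fun j => by
    have := hf.mem_union j
    rw [Finset.mem_union, mem_sdiff, mem_sdiff] at this
    exact mem_range.1 (this.elim (fun h => hA h.1) (fun h => hB h.1))
  refine IsAlt.le_altLen (f := Fin.snoc (α := fun _ => ℕ) f n) ?_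
  rw [sdiff_insert_of_notMem hnB]
  exact (hf.mono (sdiff_subset_sdiff (subset_insert n A) le_rfl) le_rfl).snoc
    (by simp [hm, hnB]) hlt

lemma altLen_le_of_altLen_insert_le (hr : Odd r) (hA : A ⊆ range n) (hB : B ⊆ range n)
    (hAB : altLen (insert n A) B ≤ r + 1) (hBA : altLen (insert n B) A ≤ r + 1) :
    altLen A B ≤ r := by
  by_contra! h
  obtain ⟨f, hf | hf⟩ := exists_isAlt_of_le_altLen h
  · have := hf.succ_le_altLen_insert hA hB hr.add_one
    omega
  · have := hf.succ_le_altLen_insert hB hA hr.add_one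
    omega

lemma IsAlt.surrounds {f : Fin r → ℕ} (hf : IsAlt (A \ B) (B \ A) f) (hr : Odd r)
    (hA : A ⊆ range n) (hB : B ⊆ range n)
    (hAB : altLen (insert n A) B ≤ r + 1) (hBA : altLen (insert n B) A ≤ r + 1) :
    Surrounds A B := by
  have hne : ∀ x ∈ A \ B, ∀ y ∈ B \ A, y ≠ x := by
    rintro x hx _ hy rfl
    exact (mem_sdiff.1 hx).2 (mem_sdiff.1 hy).1
  have hpos := hr.pos
  let first : Fin r := ⟨0, hpos⟩
  let last : Fin r := ⟨r - 1, by omega⟩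
  have hfirst : f first ∈ A \ B := by simpa [first] using hf.2 first
  have hlast : f last ∈ A \ B := by simpa [last, Nat.Odd.sub_odd hr odd_one] using hf.2 last
  constructor
  · by_contra hmin
    obtain ⟨y, hy, hyx⟩ := exists_le_of_not_min_lt hfirst hmin
    have hlt : ∀ j, y < f j := fun j =>
      (hyx.lt_of_ne (hne _ hfirst _ hy)).trans_le (hf.1.monotone (Nat.zero_le j))
    have := (hf.cons hy hlt).succ_le_altLen_insert hB hA hr.add_one
    omega
  · by_contra hmax
    obtain ⟨y, hy, hxy⟩ := exists_le_of_not_max_lt hlast hmax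
    have hlt : ∀ j, f j < y := fun j =>
      (hf.1.monotone (show (j : ℕ) ≤ r - 1 by omega)).trans_lt
        (hxy.lt_of_ne (hne _ hlast _ hy).symm)
    have := (hf.snoc (by rwa [if_neg (Nat.not_even_iff_odd.2 hr)]) hlt).succ_le_altLen_insert
      hA hB hr.add_one
    omega

lemma surrounds_or_surrounds_of_altLen_eq (hr : Odd r) (hA : A ⊆ range n) (hB : B ⊆ range n)
    (hAB : altLen (insert n A) B ≤ r + 1) (hBA : altLen (insert n B) A ≤ r + 1)
    (h : altLen A B = r) : Surrounds A B ∨ Surrounds B A := by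
  obtain ⟨f, hf | hf⟩ := exists_isAlt_of_le_altLen h.ge
  · exact Or.inl (hf.surrounds hr hA hB hAB hBA)
  · exact Or.inr (hf.surrounds hr hB hA hBA hAB)

lemma altLen_insert_le_of_weaklySep (hA : n ∉ A) (hB : B ⊆ range n) (hcard : B.card ≤ A.card)
    (h : WeaklySep r (insert n A) B) : altLen (insert n A) B ≤ r + 1 := by
  refine Nat.le_of_lt_succ (h.1.lt_of_ne fun heq => ?_)
  rcases h.2 heq with ⟨-, hc⟩ | ⟨hs, -⟩
  · rw [card_insert_of_notMem hA] at hc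
    omega
  · have hn : n ∈ insert n A \ B :=
      mem_sdiff.2 ⟨mem_insert_self n A, fun h => notMem_range_self (hB h)⟩
    have hlt : (B \ insert n A).max < n := (Finset.sup_lt_iff (WithBot.bot_lt_coe n)).2
      fun b hb => WithBot.coe_lt_coe.2 (mem_range.1 (hB (mem_sdiff.1 hb).1))
    exact lt_irrefl _ ((le_max hn).trans_lt (hs.2.trans hlt))

end Twins

theorem twins_level_separated_general (r n : ℕ) (hr : Odd r) (hr3 : 3 ≤ r)
    (W : Finset (Finset ℕ))
    (hWsep : ∀ A ∈ W, ∀ B ∈ W, WeaklySep r A B) (i : ℕ) :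
    ∀ A B : Finset ℕ,
      A ⊆ Finset.Icc 1 (n - 1) → A.card = i → A ∈ W → insert n A ∈ W →
      B ⊆ Finset.Icc 1 (n - 1) → B.card = i → B ∈ W → insert n B ∈ W →
      altLen A B ≤ (r - 1) + 1 ∧ WeaklySep (r - 2) A B := by
  intro A B hA hAc hAW hA'W hB hBc hBW hB'W
  have hIcc : Icc 1 (n - 1) ⊆ range n := fun a ha => mem_range.2 (by grind)
  have hAn := hA.trans hIcc
  have hBn := hB.trans hIcc
  have hAB := altLen_insert_le_of_weaklySep (fun h => notMem_range_self (hAn h)) hBn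
    (by omega) (hWsep _ hA'W _ hBW)
  have hBA := altLen_insert_le_of_weaklySep (fun h => notMem_range_self (hBn h)) hAn
    (by omega) (hWsep _ hB'W _ hAW)
  have hle := altLen_le_of_altLen_insert_le hr hAn hBn hAB hBA
  refine ⟨by omega, by omega, fun heq => ?_⟩
  rcases surrounds_or_surrounds_of_altLen_eq hr hAn hBn hAB hBA (by omega) with h | h
  · exact Or.inl ⟨h, by omega⟩
  · exact Or.inr ⟨h, by omega⟩

/-- (Claim 1) for each i, the collection of twins
T^i = {A ⊆ [n-1] : |A| = i, A ∈ W, A ∪ {n} ∈ W} is (r-1)-separated,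
and moreover weakly (r-2)-separated. -/
theorem twins_level_separated (r n : ℕ) (hr : Odd r) (hr3 : 3 ≤ r) (hn : 2 ≤ n)
    (W : Finset (Finset ℕ)) (hWsub : ∀ A ∈ W, A ⊆ Finset.Icc 1 n)
    (hWsep : ∀ A ∈ W, ∀ B ∈ W, WeaklySep r A B) (i : ℕ) :
    ∀ A B : Finset ℕ,
      A ⊆ Finset.Icc 1 (n - 1) → A.card = i → A ∈ W → insert n A ∈ W →
      B ⊆ Finset.Icc 1 (n - 1) → B.card = i → B ∈ W → insert n B ∈ W →
      altLen A B ≤ (r - 1) + 1 ∧ WeaklySep (r - 2) A B :=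
  twins_level_separated_general r n hr hr3 W hWsep i
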